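/- arXiv:1212.5920 — 4 statements merged into one kernel-verified Lean document; each statement's English description precedes it below -/
import Mathlib

section
/- Let k ≥ 1 be an integer, let λ be a partition all of whose parts are at most k, and let μ be a partition all of whose parts are at most 2k, with conjugates λ' and μ'. Then Σ_{p=1}^{ℓ(μ)} Σ_{q=1}^{ℓ(λ)} min{μ_p, 2·λ_q} = Σ_{s=1}^{k} λ'_s · ( μ'_{2s−1} + μ'_{2s} ). -/
/-!
Both sides count the triples `(p, q, t)` with `1 ≤ t ≤ 2k`, `t ≤ μ_p` and `t ≤ 2λ_q`: for fixed
`p, q` there are `min μ_p (2λ_q)` of them, while for fixed `t` there are `μ'_t · #{q : t ≤ 2λ_q}`.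
Grouping `t` into the pairs `2s - 1, 2s` turns `#{q : t ≤ 2λ_q}` into `λ'_s`.
-/

open Finset

theorem Finset.sum_Icc_two_mul_eq_sum_pairs {M : Type*} [AddCommMonoid M] (f : ℕ → M) (k : ℕ) :
    ∑ t ∈ Icc 1 (2 * k), f t = ∑ s ∈ Icc 1 k, (f (2 * s - 1) + f (2 * s)) := by
  induction k with
  | zero => simp
  | succ k ih =>
    rw [sum_Icc_succ_top (by omega), show 2 * (k + 1) = 2 * k + 1 + 1 by ring,
      sum_Icc_succ_top (by omega), sum_Icc_succ_top (by omega), ih, Nat.add_sub_cancel,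
      add_assoc]

theorem Nat.min_eq_sum_Icc_ite {a b n : ℕ} (ha : a ≤ n) :
    min a b = ∑ t ∈ Icc 1 n, if t ≤ a ∧ t ≤ b then (1 : ℕ) else 0 := by
  rw [← card_filter, show {t ∈ Icc 1 n | t ≤ a ∧ t ≤ b} = Icc 1 (min a b) by
    ext; simp only [mem_filter, mem_Icc]; omega,
    Nat.card_Icc, Nat.add_sub_cancel]

theorem sum_sum_min_eq_sum_card_mul_card {α β : Type*} [Fintype α] [Fintype β]
    (f : α → ℕ) (g : β → ℕ) {n : ℕ} (hf : ∀ a, f a ≤ n) :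
    ∑ a, ∑ b, min (f a) (g b) = ∑ t ∈ Icc 1 n, #{a | t ≤ f a} * #{b | t ≤ g b} := by
  simp_rw [card_filter, sum_mul_sum, ite_zero_mul_ite_zero, one_mul, Nat.min_eq_sum_Icc_ite (hf _)]
  exact (sum_congr rfl fun _ _ => sum_comm).trans sum_comm

theorem card_filter_two_mul_sub_one_le_two_mul {β : Type*} [Fintype β] (g : β → ℕ) (s : ℕ) :
    #{b | 2 * s - 1 ≤ 2 * g b} = #{b | s ≤ g b} := by
  congr 1; ext; simp only [mem_filter, mem_univ, true_and]; omega

theorem card_filter_two_mul_le_two_mul {β : Type*} [Fintype β] (g : β → ℕ) (s : ℕ) :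
    #{b | 2 * s ≤ 2 * g b} = #{b | s ≤ g b} := by
  simp_rw [Nat.mul_le_mul_left_iff two_pos]

theorem sum_min_charges_eq_sum_conjugate_products_general
    (k : ℕ) (ℓ₁ ℓ₂ : ℕ) (lam : Fin ℓ₁ → ℕ) (mu : Fin ℓ₂ → ℕ)
    (hmu_le : ∀ p, mu p ≤ 2 * k) :
    ∑ p : Fin ℓ₂, ∑ q : Fin ℓ₁, min (mu p) (2 * lam q)
      = ∑ s ∈ Finset.Icc 1 k,
          (Finset.univ.filter (fun q : Fin ℓ₁ => s ≤ lam q)).card *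
            ((Finset.univ.filter (fun p : Fin ℓ₂ => 2 * s - 1 ≤ mu p)).card +
              (Finset.univ.filter (fun p : Fin ℓ₂ => 2 * s ≤ mu p)).card) := by
  rw [sum_sum_min_eq_sum_card_mul_card mu (fun q => 2 * lam q) hmu_le,
    sum_Icc_two_mul_eq_sum_pairs]
  refine sum_congr rfl fun s _ => ?_
  rw [card_filter_two_mul_sub_one_le_two_mul, card_filter_two_mul_le_two_mul]
  ring

/-- Let `k ≥ 1`, let `λ` be a partition with all parts `≤ k` and `μ`
a partition with all parts `≤ 2k` (partitions given as weakly decreasing functions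
with positive parts), with conjugates `λ'`, `μ'` (where `λ'_s = #{q : λ_q ≥ s}`).
Then `Σ_p Σ_q min (μ_p) (2 λ_q) = Σ_{s=1}^{k} λ'_s (μ'_{2s-1} + μ'_{2s})`. -/
theorem sum_min_charges_eq_sum_conjugate_products
    (k : ℕ) (hk : 1 ≤ k) (ℓ₁ ℓ₂ : ℕ) (lam : Fin ℓ₁ → ℕ) (mu : Fin ℓ₂ → ℕ)
    (hlam_pos : ∀ q, 1 ≤ lam q)
    (hlam_dec : ∀ q q' : Fin ℓ₁, q ≤ q' → lam q' ≤ lam q)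
    (hlam_le : ∀ q, lam q ≤ k)
    (hmu_pos : ∀ p, 1 ≤ mu p)
    (hmu_dec : ∀ p p' : Fin ℓ₂, p ≤ p' → mu p' ≤ mu p)
    (hmu_le : ∀ p, mu p ≤ 2 * k) :
    ∑ p : Fin ℓ₂, ∑ q : Fin ℓ₁, min (mu p) (2 * lam q)
      = ∑ s ∈ Finset.Icc 1 k,
          (Finset.univ.filter (fun q : Fin ℓ₁ => s ≤ lam q)).card *
            ((Finset.univ.filter (fun p : Fin ℓ₂ => 2 * s - 1 ≤ mu p)).card +
              (Finset.univ.filter (fun p : Fin ℓ₂ => 2 * s ≤ mu p)).card) :=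
  sum_min_charges_eq_sum_conjugate_products_general k ℓ₁ ℓ₂ lam mu hmu_le
end

section
/- Fix an integer k ≥ 1 and nonnegative integers r⁽¹⁾ ≥ r⁽²⁾ ≥ … ≥ r⁽ᵏ⁾ ≥ 0, with the convention r⁽ᵏ⁺¹⁾ = 0, and define n_p = #{s ∈ {1,…,k} : r⁽ˢ⁾ ≥ p} for 1 ≤ p ≤ r⁽¹⁾ (so n₁ ≥ n₂ ≥ … ≥ n_{r⁽¹⁾} ≥ 1). Then for every integer N, the number of integer sequences (m_p)_{p=1}^{r⁽¹⁾} satisfying (i) m_p ≤ −n_p − 2·Σ_{p'=1}^{p−1} min{n_p, n_{p'}} for all 1 ≤ p ≤ r⁽¹⁾, (ii) m_{p+1} ≤ m_p − 2·n_p whenever 1 ≤ p ≤ r⁽¹⁾−1 and n_{p+1} = n_p, and (iii) −Σ_{p=1}^{r⁽¹⁾} m_p = N, is equal to the number of k-tuples of partitions (σ⁽¹⁾, …, σ⁽ᵏ⁾) with ℓ(σ⁽ˢ⁾) ≤ r⁽ˢ⁾ − r⁽ˢ⁺¹⁾ for each 1 ≤ s ≤ k and Σ_{s=1}^{k} |σ⁽ˢ⁾|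 = N − Σ_{s=1}^{k} (r⁽ˢ⁾)². -/
/-- A partition: a finite weakly decreasing list of positive integers. -/
structure Ptn where
  parts : List ℕ
  sorted : parts.Pairwise (· ≥ ·)
  pos : ∀ x ∈ parts, 0 < x

/-- The length `ℓ(λ)` of a partition. -/
def Ptn.length (lam : Ptn) : ℕ := lam.parts.length

/-- The size `|λ|` of a partition. -/
def Ptn.size (lam : Ptn) : ℕ := lam.parts.sum

/-!
The charges `n_p` are antitone, so condition (i) says `m_p ≤ -(2p+1) n_p`, and the substitution
`m_p = -(2p+1) n_p - t_p` turns energy sequences into sequences `t` of naturals that weakly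
increase along each run on which `n` is constant, with total
`N - Σ_p (2p+1) n_p = N - Σ_s (r⁽ˢ⁾)²`. The run on which `n_p = s` is `r⁽ˢ⁺¹⁾ < p ≤ r⁽ˢ⁾`;
read downwards, `t` on it is an antitone sequence of length `r⁽ˢ⁾ - r⁽ˢ⁺¹⁾`, i.e. a partition
`σ⁽ˢ⁾` with at most that many parts (once its zeros are dropped).
-/

open Finset

theorem Fin.antitone_of_succ_le {α : Type*} [Preorder α] {L : ℕ} {f : Fin L → α}
    (h : ∀ i j : Fin L, (j : ℕ) = i + 1 → f j ≤ f i) : Antitone f := by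
  cases L with
  | zero => exact fun i => i.elim0
  | succ L => exact Fin.antitone_iff_succ_le.2 fun i => h _ _ rfl

namespace List

theorem getD_antitone_of_pairwise {l : List ℕ} (hl : l.Pairwise (· ≥ ·)) :
    Antitone (l.getD · 0) := by
  intro i j hij
  rcases lt_or_ge j l.length with hj | hj
  · simp only [getD_eq_getElem _ _ hj, getD_eq_getElem _ _ (hij.trans_lt hj)]
    exact hl.rel_get_of_le (a := ⟨i, hij.trans_lt hj⟩) (b := ⟨j, hj⟩) hij
  · simp only [getD_eq_default _ _ hj, zero_le]

theorem getD_filter_pos {l : List ℕ} (hl : l.Pairwise (· ≥ ·)) (i : ℕ) :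
    (l.filter (0 < ·)).getD i 0 = l.getD i 0 := by
  induction l generalizing i with
  | nil => rfl
  | cons a l ih =>
    rcases Nat.eq_zero_or_pos a with rfl | ha
    · have hnil : (0 :: l).filter (0 < ·) = [] := filter_eq_nil_iff.2 fun x hx => by
        simpa using (mem_cons.1 hx).elim (·.le) (rel_of_pairwise_cons hl)
      rw [hnil, getD_nil]
      exact (Nat.le_zero.1 (getD_antitone_of_pairwise hl (Nat.zero_le i))).symm
    · cases i
      · simp [filter_cons_of_pos, ha]
      · simpa [filter_cons_of_pos, ha] using ih hl.of_cons _

theorem sum_filter_pos (l : List ℕ) : (l.filter (0 < ·)).sum = l.sum := by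
  induction l with
  | nil => rfl
  | cons a l ih => rcases Nat.eq_zero_or_pos a with rfl | ha <;> simp [*]

theorem getD_ofFn {L : ℕ} (f : Fin L → ℕ) (i : ℕ) :
    (ofFn f).getD i 0 = if h : i < L then f ⟨i, h⟩ else 0 := by
  simp only [getD_eq_getElem?_getD, List.getElem?_ofFn]
  split_ifs <;> rfl

end List

namespace Ptn

theorem ext_getD {μ ν : Ptn} (h : ∀ i, μ.parts.getD i 0 = ν.parts.getD i 0) : μ = ν := by
  obtain ⟨l, hl, hlpos⟩ := μ
  obtain ⟨l', hl', hl'pos⟩ := ν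
  suffices l = l' by subst this; rfl
  refine List.ext_getElem? fun i => ?_
  have hi := h i
  simp only [List.getD_eq_getElem?_getD] at hi
  cases hx : l[i]? <;> cases hy : l'[i]? <;>
    simp only [hx, hy, Option.getD_some, Option.getD_none] at hi ⊢
  · exact absurd hi.symm (hl'pos _ (List.mem_of_getElem? hy)).ne'
  · exact absurd hi (hlpos _ (List.mem_of_getElem? hx)).ne'
  · rw [hi]

theorem pairwise_ofFn_of_antitone {L : ℕ} {f : Fin L → ℕ} (hf : Antitone f) :
    (List.ofFn f).Pairwise (· ≥ ·) :=
  List.pairwise_ofFn.2 fun _ _ hij => hf hij.le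

def ofAntitone {L : ℕ} (f : Fin L → ℕ) (hf : Antitone f) : Ptn where
  parts := (List.ofFn f).filter (0 < ·)
  sorted := (pairwise_ofFn_of_antitone hf).filter _
  pos := fun x hx => by simpa using (List.mem_filter.1 hx).2

theorem length_ofAntitone {L : ℕ} (f : Fin L → ℕ) (hf : Antitone f) :
    (ofAntitone f hf).length ≤ L :=
  (List.length_filter_le _ _).trans List.length_ofFn.le

theorem size_ofAntitone {L : ℕ} (f : Fin L → ℕ) (hf : Antitone f) :
    (ofAntitone f hf).size = ∑ i, f i := by
  rw [size, ofAntitone, List.sum_filter_pos, List.sum_ofFn]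

theorem getD_ofAntitone {L : ℕ} (f : Fin L → ℕ) (hf : Antitone f) (i : ℕ) :
    (ofAntitone f hf).parts.getD i 0 = if h : i < L then f ⟨i, h⟩ else 0 := by
  rw [ofAntitone, List.getD_filter_pos (pairwise_ofFn_of_antitone hf), List.getD_ofFn]

def equivAntitone (L : ℕ) :
    {μ : Ptn // μ.length ≤ L} ≃ {f : Fin L → ℕ // Antitone f} where
  toFun μ := ⟨fun i => μ.1.parts.getD i 0,
    fun _ _ hij => List.getD_antitone_of_pairwise μ.1.sorted hij⟩
  invFun f := ⟨ofAntitone f.1 f.2, length_ofAntitone f.1 f.2⟩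
  left_inv μ := by
    refine Subtype.ext (ext_getD fun i => ?_)
    rw [getD_ofAntitone]
    split_ifs with h
    · rfl
    · exact (List.getD_eq_default _ _ (μ.2.trans (not_lt.1 h))).symm
  right_inv f := by
    ext i
    simp only [getD_ofAntitone, i.2, dif_pos]

end Ptn

theorem sum_range_two_mul_add_one (m : ℕ) : ∑ i ∈ range m, (2 * i + 1) = m ^ 2 := by
  induction m with
  | zero => rfl
  | succ m ih => rw [sum_range_succ, ih]; ring

theorem neg_sub_two_mul_sum_min {n : ℕ → ℕ} (hn : Antitone n) (p : ℕ) :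
    -(n p : ℤ) - 2 * ∑ p' ∈ range p, (min (n p) (n p') : ℤ)
      = -((2 * p + 1) * n p : ℤ) := by
  rw [sum_congr rfl fun p' hp' => min_eq_left (Nat.cast_le.2 (hn (mem_range.1 hp').le)),
    sum_const, card_range, nsmul_eq_mul]
  ring

def natEquivBoundedAbove {ι : Type*} (E : ι → ℤ) :
    (ι → ℕ) ≃ {m : ι → ℤ // ∀ i, m i ≤ -E i} where
  toFun t := ⟨fun i => -E i - t i, fun i => by simp⟩
  invFun m i := (-E i - m.1 i).toNat
  left_inv t := by ext; simp
  right_inv m := by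
    ext i
    have := m.2 i
    simp only [Int.toNat_of_nonneg (by omega : 0 ≤ -E i - m.1 i)]
    ring

def MonotoneOnRuns (n : ℕ → ℕ) {R : ℕ} (t : Fin R → ℕ) : Prop :=
  ∀ p : ℕ, (h : p + 1 < R) → n (p + 1) = n p →
    t ⟨p, lt_of_le_of_lt (Nat.le_succ p) h⟩ ≤ t ⟨p + 1, h⟩

theorem card_energy_sequences_eq_card_monotoneOnRuns {n : ℕ → ℕ} (hn : Antitone n)
    (R : ℕ) (N : ℤ) :
    Nat.card {m : Fin R → ℤ //
        (∀ p : Fin R,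
            m p ≤ -(n (p : ℕ) : ℤ)
              - 2 * ∑ p' ∈ Finset.range (p : ℕ), (min (n (p : ℕ)) (n p') : ℤ)) ∧
        (∀ p : ℕ, (h : p + 1 < R) → n (p + 1) = n p →
            m ⟨p + 1, h⟩ ≤ m ⟨p, lt_of_le_of_lt (Nat.le_succ p) h⟩ - 2 * (n p : ℤ)) ∧
        -(∑ p : Fin R, m p) = N}
      = Nat.card {t : Fin R → ℕ //
        MonotoneOnRuns n t ∧
          (∑ p : Fin R, (t p : ℤ)) = N - ∑ p : Fin R, ((2 * p + 1) * n p : ℤ)} := by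
  simp only [neg_sub_two_mul_sum_min hn]
  refine (Nat.card_congr <| ((natEquivBoundedAbove _).subtypeEquiv fun t => ?_).trans
    (Equiv.subtypeSubtypeEquivSubtypeInter _ _)).symm
  refine and_congr (forall_congr' fun p => forall_congr' fun h => forall_congr' fun hnp => ?_) ?_
  · simp only [natEquivBoundedAbove, Equiv.coe_fn_mk]
    push_cast
    rw [hnp]
    constructor <;> intro <;> linarith
  · simp only [natEquivBoundedAbove, Equiv.coe_fn_mk, sum_sub_distrib, sum_neg_distrib]
    constructor <;> intro <;> linarith

/-- `charge k r p` is the paper's `n_{p+1}`: positions `p` are counted from `0`. -/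
def charge (k : ℕ) (r : ℕ → ℕ) (p : ℕ) : ℕ :=
  ((Finset.range k).filter (fun s => p + 1 ≤ r s)).card

section Charge

variable {k : ℕ} {r : ℕ → ℕ}

theorem charge_antitone : Antitone (charge k r) :=
  fun _ _ hpq => card_le_card <| monotone_filter_right _ fun _ h => by omega

theorem charge_le (p : ℕ) : charge k r p ≤ k :=
  (card_filter_le _ _).trans (card_range k).le

/-- `{s ∈ range k | p < r s}` is the initial segment `range (charge k r p)`. -/
theorem lt_charge_iff (hr : Antitone r) (hrk : ∀ s, k ≤ s → r s = 0) {s p : ℕ} :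
    s < charge k r p ↔ p < r s := by
  constructor
  · intro hs
    by_contra! hps
    have hsub : (range k).filter (fun s => p + 1 ≤ r s) ⊆ range s := fun s' hs' => by
      simp only [mem_filter, mem_range] at hs' ⊢
      by_contra! hss'
      have := hr hss'
      omega
    exact hs.not_ge (by simpa [charge] using card_le_card hsub)
  · intro hps
    have hsk : s < k := by
      by_contra! hsk
      simp [hrk s hsk] at hps
    have hsub : range (s + 1) ⊆ (range k).filter (fun s => p + 1 ≤ r s) := fun s' hs' => by
      simp only [mem_filter, mem_range] at hs' ⊢
      exact ⟨by omega, (hr (Nat.le_of_lt_succ hs')).trans' hps⟩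
    simpa [charge] using card_le_card hsub

theorem charge_eq_succ_iff (hr : Antitone r) (hrk : ∀ s, k ≤ s → r s = 0) {s p : ℕ} :
    charge k r p = s + 1 ↔ r (s + 1) ≤ p ∧ p < r s := by
  have := lt_charge_iff hr hrk (s := s) (p := p)
  have := lt_charge_iff hr hrk (s := s + 1) (p := p)
  omega

theorem sum_odd_mul_charge (hr : Antitone r) :
    ∑ p ∈ range (r 0), (2 * p + 1) * charge k r p = ∑ s ∈ range k, r s ^ 2 := by
  simp only [charge, card_filter, mul_sum, mul_ite, mul_one, mul_zero]
  rw [sum_comm]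
  refine sum_congr rfl fun s _ => ?_
  have hrange : (range (r 0)).filter (fun p => p + 1 ≤ r s) = range (r s) := by
    ext p
    simp only [mem_filter, mem_range]
    have := hr (Nat.zero_le s)
    omega
  rw [← sum_filter, hrange, sum_range_two_mul_add_one]

theorem charge_pos (hr : Antitone r) (hrk : ∀ s, k ≤ s → r s = 0) {p : ℕ} (hp : p < r 0) :
    0 < charge k r p :=
  (lt_charge_iff hr hrk).2 hp

theorem charge_sub_one_bounds (hr : Antitone r) (hrk : ∀ s, k ≤ s → r s = 0) {p : ℕ}
    (hp : p < r 0) : r (charge k r p - 1 + 1) ≤ p ∧ p < r (charge k r p - 1) :=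
  (charge_eq_succ_iff hr hrk).1 (Nat.sub_one_add_one (charge_pos hr hrk hp).ne').symm

/-- The `s`-th block `[r (s + 1), r s)` is the run on which `charge k r = s + 1`; it is
enumerated downwards, so that runs on which `t` increases become antitone sequences. -/
def blockEquiv (hr : Antitone r) (hrk : ∀ s, k ≤ s → r s = 0) :
    (Σ s : Fin k, Fin (r s - r (s + 1))) ≃ Fin (r 0) where
  toFun x := ⟨r x.1 - 1 - x.2, by have := hr (Nat.zero_le (x.1 : ℕ)); omega⟩
  invFun p :=
    ⟨⟨charge k r p - 1, by
        have := charge_le (k := k) (r := r) p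
        have := charge_pos hr hrk p.2
        omega⟩,
      ⟨r (charge k r p - 1) - 1 - p, by
        have := charge_sub_one_bounds hr hrk p.2
        show _ < r (charge k r p - 1) - r (charge k r p - 1 + 1)
        omega⟩⟩
  left_inv := by
    rintro ⟨s, j⟩
    have hc : charge k r (r s - 1 - j) = s + 1 :=
      (charge_eq_succ_iff hr hrk).2 (by omega)
    have hfst : charge k r (r s - 1 - j) - 1 = s := by omega
    ext
    · exact hfst
    · exact (Fin.heq_ext_iff (congrArg (fun s : Fin k => r s - r (s + 1)) (Fin.ext hfst))).2
        (by dsimp only; rw [hfst]; omega)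
  right_inv p := by
    have := charge_sub_one_bounds hr hrk p.2
    ext
    show r (charge k r p - 1) - 1 - (r (charge k r p - 1) - 1 - p) = p
    omega

theorem blockEquiv_apply (hr : Antitone r) (hrk : ∀ s, k ≤ s → r s = 0)
    (x : Σ s : Fin k, Fin (r s - r (s + 1))) :
    (blockEquiv hr hrk x : ℕ) = r x.1 - 1 - x.2 := rfl

theorem charge_blockEquiv (hr : Antitone r) (hrk : ∀ s, k ≤ s → r s = 0)
    (x : Σ s : Fin k, Fin (r s - r (s + 1))) :
    charge k r (blockEquiv hr hrk x) = x.1 + 1 :=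
  (charge_eq_succ_iff hr hrk).2 (by rw [blockEquiv_apply]; omega)

theorem monotoneOnRuns_charge_iff (hr : Antitone r) (hrk : ∀ s, k ≤ s → r s = 0)
    (t : Fin (r 0) → ℕ) :
    MonotoneOnRuns (charge k r) t ↔
      ∀ s, Antitone fun j => t (blockEquiv hr hrk ⟨s, j⟩) := by
  constructor
  · intro ht s
    refine Fin.antitone_of_succ_le fun i j hij => ?_
    have hi := charge_blockEquiv hr hrk ⟨s, i⟩
    have hj := charge_blockEquiv hr hrk ⟨s, j⟩
    have hsucc : (blockEquiv hr hrk ⟨s, i⟩ : ℕ) = blockEquiv hr hrk ⟨s, j⟩ + 1 := by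
      simp only [blockEquiv_apply]
      omega
    have hlt : (blockEquiv hr hrk ⟨s, j⟩ : ℕ) + 1 < r 0 := hsucc ▸ Fin.is_lt _
    rw [show blockEquiv hr hrk ⟨s, i⟩ = ⟨_, hlt⟩ from Fin.ext hsucc]
    exact ht _ hlt (by rw [← hsucc, hi, hj])
  · intro ht p hp hcharge
    obtain ⟨⟨s, j⟩, hx⟩ := (blockEquiv hr hrk).surjective ⟨p + 1, hp⟩
    have hs : charge k r (p + 1) = s + 1 := by
      simpa only [hx] using charge_blockEquiv hr hrk ⟨s, j⟩
    have hj : r s - 1 - j = p + 1 := congrArg Fin.val hx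
    have := ((charge_eq_succ_iff hr hrk).1 (hcharge.symm.trans hs)).1
    have hj1 : (j : ℕ) + 1 < r s - r (s + 1) := by omega
    have hp' : (⟨p, lt_of_le_of_lt (Nat.le_succ p) hp⟩ : Fin (r 0))
        = blockEquiv hr hrk ⟨s, ⟨j + 1, hj1⟩⟩ :=
      Fin.ext (by rw [blockEquiv_apply]; dsimp only; omega)
    rw [hp', ← hx]
    exact ht s (Fin.le_def.2 (Nat.le_succ _))

def partitionTupleEquiv (hr : Antitone r) (hrk : ∀ s, k ≤ s → r s = 0) :
    {t : Fin (r 0) → ℕ // MonotoneOnRuns (charge k r) t} ≃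
      {σ : Fin k → Ptn // ∀ s : Fin k, (σ s).length ≤ r s - r (s + 1)} :=
  ((((blockEquiv hr hrk).symm.arrowCongr (Equiv.refl ℕ)).trans
      (Equiv.piCurry fun _ _ => ℕ)).subtypeEquiv (monotoneOnRuns_charge_iff hr hrk)).trans <|
    Equiv.subtypePiEquivPi.trans <|
      (Equiv.piCongrRight fun _ => (Ptn.equivAntitone _).symm).trans Equiv.subtypePiEquivPi.symm

theorem sum_size_partitionTupleEquiv (hr : Antitone r) (hrk : ∀ s, k ≤ s → r s = 0)
    (t : {t : Fin (r 0) → ℕ // MonotoneOnRuns (charge k r) t}) :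
    ∑ s, ((partitionTupleEquiv hr hrk t).1 s).size = ∑ p, t.1 p := by
  have hsize : ∀ s, ((partitionTupleEquiv hr hrk t).1 s).size
      = ∑ j, t.1 (blockEquiv hr hrk ⟨s, j⟩) := fun s =>
    Ptn.size_ofAntitone _ ((monotoneOnRuns_charge_iff hr hrk t.1).1 t.2 s)
  simp only [hsize]
  rw [← Fintype.sum_sigma (fun x => t.1 (blockEquiv hr hrk x)), Equiv.sum_comp]

theorem card_monotoneOnRuns_eq_card_partition_tuples (hr : Antitone r)
    (hrk : ∀ s, k ≤ s → r s = 0) (M : ℤ) :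
    Nat.card {t : Fin (r 0) → ℕ //
        MonotoneOnRuns (charge k r) t ∧ (∑ p : Fin (r 0), (t p : ℤ)) = M}
      = Nat.card {σ : Fin k → Ptn //
          (∀ s : Fin k, (σ s).length ≤ r (s : ℕ) - r ((s : ℕ) + 1)) ∧
          (∑ s : Fin k, ((σ s).size : ℤ)) = M} :=
  Nat.card_congr <| (Equiv.subtypeSubtypeEquivSubtypeInter _ _).symm.trans <|
    ((partitionTupleEquiv hr hrk).subtypeEquiv fun t => by
      rw [← Nat.cast_sum, ← sum_size_partitionTupleEquiv hr hrk t, Nat.cast_sum]).trans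
    (Equiv.subtypeSubtypeEquivSubtypeInter _ _)

end Charge

theorem card_energy_sequences_eq_card_partition_tuples_general
    (k : ℕ) (r : ℕ → ℕ)
    (hr_anti : ∀ i j, i ≤ j → r j ≤ r i)
    (hr_zero : ∀ s, k ≤ s → r s = 0)
    (n : ℕ → ℕ)
    (hn : ∀ p, n p = ((Finset.range k).filter (fun s => p + 1 ≤ r s)).card)
    (N : ℤ) :
    Nat.card {m : Fin (r 0) → ℤ //
        (∀ p : Fin (r 0),
            m p ≤ -(n (p : ℕ) : ℤ)
              - 2 * ∑ p' ∈ Finset.range (p : ℕ), (min (n (p : ℕ)) (n p') : ℤ)) ∧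
        (∀ p : ℕ, (h : p + 1 < r 0) → n (p + 1) = n p →
            m ⟨p + 1, h⟩ ≤ m ⟨p, lt_of_le_of_lt (Nat.le_succ p) h⟩ - 2 * (n p : ℤ)) ∧
        -(∑ p : Fin (r 0), m p) = N}
      = Nat.card {σ : Fin k → Ptn //
          (∀ s : Fin k, (σ s).length ≤ r (s : ℕ) - r ((s : ℕ) + 1)) ∧
          (∑ s : Fin k, ((σ s).size : ℤ))
            = N - ∑ s ∈ Finset.range k, (r s : ℤ) ^ 2} := by
  obtain rfl : n = charge k r := funext hn
  have hr : Antitone r := fun i j h => hr_anti i j h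
  have henergy : ∑ p : Fin (r 0), ((2 * p + 1) * charge k r p : ℤ)
      = ∑ s ∈ range k, (r s : ℤ) ^ 2 := by
    rw [Fin.sum_univ_eq_sum_range (fun p => ((2 * p + 1) * charge k r p : ℤ))]
    exact_mod_cast sum_odd_mul_charge hr
  rw [card_energy_sequences_eq_card_monotoneOnRuns charge_antitone, henergy]
  exact card_monotoneOnRuns_eq_card_partition_tuples hr hr_zero _

/-- Fix `k ≥ 1` and nonnegative integers `r⁽¹⁾ ≥ … ≥ r⁽ᵏ⁾ ≥ 0`
(encoded by an antitone `r : ℕ → ℕ` vanishing from index `k` on, with the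
convention `r⁽ᵏ⁺¹⁾ = 0`; here `r s` denotes `r⁽ˢ⁺¹⁾`), and define
`n_p = #{s ∈ {1,…,k} : r⁽ˢ⁾ ≥ p}` (here `n p` denotes `n_{p+1}`).  Then for every
integer `N`, the number of integer sequences `(m_p)_{p=1}^{r⁽¹⁾}` satisfying the
difference conditions (i), (ii) and total energy condition (iii), equals the number
of `k`-tuples of partitions `(σ⁽¹⁾, …, σ⁽ᵏ⁾)` with `ℓ(σ⁽ˢ⁾) ≤ r⁽ˢ⁾ − r⁽ˢ⁺¹⁾` and
`Σ_s |σ⁽ˢ⁾| = N − Σ_s (r⁽ˢ⁾)²`. -/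
theorem card_energy_sequences_eq_card_partition_tuples
    (k : ℕ) (hk : 1 ≤ k) (r : ℕ → ℕ)
    (hr_anti : ∀ i j, i ≤ j → r j ≤ r i)
    (hr_zero : ∀ s, k ≤ s → r s = 0)
    (n : ℕ → ℕ)
    (hn : ∀ p, n p = ((Finset.range k).filter (fun s => p + 1 ≤ r s)).card)
    (N : ℤ) :
    Nat.card {m : Fin (r 0) → ℤ //
        (∀ p : Fin (r 0),
            m p ≤ -(n (p : ℕ) : ℤ)
              - 2 * ∑ p' ∈ Finset.range (p : ℕ), (min (n (p : ℕ)) (n p') : ℤ)) ∧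
        (∀ p : ℕ, (h : p + 1 < r 0) → n (p + 1) = n p →
            m ⟨p + 1, h⟩ ≤ m ⟨p, lt_of_le_of_lt (Nat.le_succ p) h⟩ - 2 * (n p : ℤ)) ∧
        -(∑ p : Fin (r 0), m p) = N}
      = Nat.card {σ : Fin k → Ptn //
          (∀ s : Fin k, (σ s).length ≤ r (s : ℕ) - r ((s : ℕ) + 1)) ∧
          (∑ s : Fin k, ((σ s).size : ℤ))
            = N - ∑ s ∈ Finset.range k, (r s : ℤ) ^ 2} :=
  card_energy_sequences_eq_card_partition_tuples_general k r hr_anti hr_zero n hn N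
end

section
/- Fix an integer k ≥ 1. For every integer m and all nonnegative integers r₁, r₂, the number of k-admissible quasi-particle data of color-type (r₂, r₁) and total energy m is equal to the sum, over all pairs (ρ, σ) where ρ = (r₁⁽¹⁾ ≥ … ≥ r₁⁽ᵏ⁾ ≥ 0) is a weakly decreasing tuple of nonnegative integers with Σ_{s=1}^{k} r₁⁽ˢ⁾ = r₁ and σ = (r₂⁽¹⁾ ≥ … ≥ r₂⁽²ᵏ⁾ ≥ 0) is a weakly decreasing tuple of nonnegative integers with Σ_{s=1}^{2k} r₂⁽ˢ⁾ = r₂, of the number of tuples of partitions (π⁽¹⁾, …, π⁽ᵏ⁾, τ⁽¹⁾, …, τ⁽²ᵏ⁾) with ℓ(π⁽ˢ⁾) ≤ r₁⁽ˢ⁾ − r₁⁽ˢ⁺¹⁾ (convention r₁⁽ᵏ⁺¹⁾ = 0), ℓ(τ⁽ˢ⁾) ≤ r₂⁽ˢ⁾ − r₂⁽ˢ⁺¹⁾ (convention r₂⁽²ᵏ⁺¹⁾ = 0), and Σ_{s=1}^{k} |π⁽ˢ⁾| + Σ_{s=1}^{2k} |τ⁽ˢ⁾| = m − E(ρ,σ),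 where E(ρ,σ) = Σ_{s=1}^{k} (r₁⁽ˢ⁾)² + Σ_{s=1}^{2k} (r₂⁽ˢ⁾)² − Σ_{s=1}^{k} r₁⁽ˢ⁾·(r₂⁽²ˢ⁻¹⁾ + r₂⁽²ˢ⁾). -/
/-- A quasi-particle datum for type `B₂⁽¹⁾`: numbers `P₁, P₂ ≥ 0` of quasi-particles of
colors 1 and 2, charges `n_{P_i,i} ≤ … ≤ n_{1,i}` (all positive) and energies
`m_{p,i} ∈ ℤ` satisfying the difference conditions (D1)–(D4).  We use 0-based
indexing: the field value `n1 p` is the paper's `n_{p+1,1}` (so `n1 0 = n_{1,1}` is the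
largest color-1 charge), and similarly for `n2`, `m1`, `m2`.  Charges and energies are
normalized to be `0` outside the index range, so that each quasi-particle datum is
represented by exactly one term of this type. -/
structure QPData where
  P1 : ℕ
  P2 : ℕ
  n1 : ℕ → ℕ
  n2 : ℕ → ℕ
  m1 : ℕ → ℤ
  m2 : ℕ → ℤ
  n1_pos : ∀ p, p < P1 → 0 < n1 p
  n2_pos : ∀ p, p < P2 → 0 < n2 p
  n1_anti : ∀ p q, p ≤ q → q < P1 → n1 q ≤ n1 p
  n2_anti : ∀ p q, p ≤ q → q < P2 → n2 q ≤ n2 p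
  n1_zero : ∀ p, P1 ≤ p → n1 p = 0
  n2_zero : ∀ p, P2 ≤ p → n2 p = 0
  m1_zero : ∀ p, P1 ≤ p → m1 p = 0
  m2_zero : ∀ p, P2 ≤ p → m2 p = 0
  D1 : ∀ p, p < P1 →
    m1 p ≤ -(n1 p : ℤ) - 2 * ∑ p' ∈ Finset.range p, (min (n1 p) (n1 p') : ℤ)
  D2 : ∀ p, p + 1 < P1 → n1 (p + 1) = n1 p → m1 (p + 1) ≤ m1 p - 2 * (n1 p : ℤ)
  D3 : ∀ p, p < P2 →
    m2 p ≤ -(n2 p : ℤ) + ∑ q ∈ Finset.range P1, (min (2 * n1 q) (n2 p) : ℤ)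
      - 2 * ∑ p' ∈ Finset.range p, (min (n2 p) (n2 p') : ℤ)
  D4 : ∀ p, p + 1 < P2 → n2 (p + 1) = n2 p → m2 (p + 1) ≤ m2 p - 2 * (n2 p : ℤ)

/-- The color-type `(r₂, r₁)` of a quasi-particle datum. -/
def QPData.colorType (d : QPData) : ℕ × ℕ :=
  (∑ p ∈ Finset.range d.P2, d.n2 p, ∑ p ∈ Finset.range d.P1, d.n1 p)

/-- The total energy `−Σ_{i,p} m_{p,i}` of a quasi-particle datum. -/
def QPData.energy (d : QPData) : ℤ :=
  -(∑ p ∈ Finset.range d.P1, d.m1 p + ∑ p ∈ Finset.range d.P2, d.m2 p)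

/-- `k`-admissibility: all color-1 charges are at most `k` and all color-2 charges are
at most `2k` (equivalently, `n_{1,1} ≤ k` and `n_{1,2} ≤ 2k`, vacuously if `P_i = 0`). -/
def QPData.Admissible (k : ℕ) (d : QPData) : Prop :=
  (∀ p, p < d.P1 → d.n1 p ≤ k) ∧ (∀ p, p < d.P2 → d.n2 p ≤ 2 * k)

/-!
The charges of one color form a partition `n`, and its conjugate `ρ` lists the numbers
`r⁽ˢ⁾` of quasi-particles of charge at least `s`. The quasi-particles of charge `s` occupy a
block of consecutive indices. On a block, the slack (bound in (D1)/(D3) minus `m_p`) is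
nonnegative and, by (D2)/(D4), nondecreasing. So the slacks of block `s` are the parts of a
partition with at most `r⁽ˢ⁾ - r⁽ˢ⁺¹⁾` parts, and the energies can be recovered from these
partitions. Double counting, `Σ_{p,q} min (a_p, b_q) = Σ_s #{p | a_p > s} · #{q | b_q > s}`,
turns the sum of the bounds into `-E(ρ, σ)`.
-/

open Finset

attribute [ext] Ptn QPData

lemma List.getD_filter_pos_s3 {l : List ℕ} (h : l.Pairwise (· ≥ ·)) (i : ℕ) :
    (l.filter (0 < ·)).getD i 0 = l.getD i 0 := by
  induction l generalizing i with
  | nil => rfl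
  | cons x l ih =>
    rw [List.pairwise_cons] at h
    by_cases hx : 0 < x
    · rw [List.filter_cons_of_pos (by simpa using hx)]
      cases i with
      | zero => rfl
      | succ i => exact ih h.2 i
    · have hzero : ∀ y ∈ x :: l, y = 0 := by
        intro y hy
        rcases List.mem_cons.1 hy with rfl | hy
        · omega
        · have := h.1 y hy
          omega
      rw [List.filter_eq_nil_iff.2 (by simpa using hzero), List.getD_nil]
      cases hi : (x :: l)[i]? with
      | none => simp [List.getD_eq_getElem?_getD, hi]
      | some y => simp [List.getD_eq_getElem?_getD, hi, hzero y (List.mem_of_getElem? hi)]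

namespace Ptn

-- 0-indexed and padded with zeros: `π.part 0` is the largest part.
def part (π : Ptn) (i : ℕ) : ℕ := π.parts.getD i 0

lemma part_eq_zero {π : Ptn} {i : ℕ} (h : π.length ≤ i) : π.part i = 0 :=
  List.getD_eq_default _ _ h

lemma part_antitone (π : Ptn) : Antitone π.part := by
  intro i j hij
  rcases lt_or_ge j π.parts.length with hj | hj
  · rcases hij.eq_or_lt with rfl | hlt
    · rfl
    · rw [part, part, List.getD_eq_getElem _ _ hj, List.getD_eq_getElem _ _ (hlt.trans hj)]
      exact List.pairwise_iff_getElem.mp π.sorted i j _ hj hlt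
  · rw [part_eq_zero hj]
    exact Nat.zero_le _

lemma getElem?_parts (π : Ptn) (i : ℕ) :
    π.parts[i]? = if π.part i = 0 then none else some (π.part i) := by
  cases h : π.parts[i]? with
  | none => simp [part, List.getD_eq_getElem?_getD, h]
  | some x =>
    have hx : 0 < x := π.pos x (List.mem_of_getElem? h)
    simp [part, List.getD_eq_getElem?_getD, h, hx.ne']

lemma ext_part {π τ : Ptn} (h : π.part = τ.part) : π = τ :=
  Ptn.ext (List.ext_getElem? fun i => by rw [getElem?_parts, getElem?_parts, h])

def ofMultiset (s : Multiset ℕ) : Ptn where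
  parts := (s.filter (0 < ·)).sort (· ≥ ·)
  sorted := Multiset.pairwise_sort _ _
  pos _ hx := (Multiset.mem_filter.mp ((Multiset.mem_sort _).mp hx)).2

lemma coe_parts_ofMultiset (s : Multiset ℕ) :
    ((ofMultiset s).parts : Multiset ℕ) = s.filter (0 < ·) :=
  Multiset.sort_eq _ _

lemma size_ofMultiset (s : Multiset ℕ) : (ofMultiset s).size = s.sum := by
  rw [size, ← Multiset.sum_coe, coe_parts_ofMultiset]
  conv_rhs => rw [← Multiset.filter_add_not (0 < ·) s]
  have hzero : ∀ x ∈ s.filter (¬ 0 < ·), x = 0 := fun x hx => by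
    simpa using (Multiset.mem_filter.mp hx).2
  rw [Multiset.sum_add, Multiset.sum_eq_zero hzero, add_zero]

lemma length_ofMultiset_le (s : Multiset ℕ) : (ofMultiset s).length ≤ Multiset.card s := by
  rw [length, ← Multiset.coe_card, coe_parts_ofMultiset]
  exact Multiset.card_le_card (Multiset.filter_le _ _)

def ofIco (e : ℕ → ℕ) (a b : ℕ) : Ptn := ofMultiset ((Ico a b).val.map e)

lemma size_ofIco (e : ℕ → ℕ) (a b : ℕ) : (ofIco e a b).size = ∑ p ∈ Ico a b, e p :=
  size_ofMultiset _

lemma length_ofIco_le (e : ℕ → ℕ) (a b : ℕ) : (ofIco e a b).length ≤ b - a := by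
  refine (length_ofMultiset_le _).trans ?_
  simp

lemma ofIco_congr {e e' : ℕ → ℕ} {a b : ℕ} (h : ∀ p ∈ Ico a b, e p = e' p) :
    ofIco e a b = ofIco e' a b :=
  congrArg ofMultiset (Multiset.map_congr rfl h)

lemma part_ofIco {e : ℕ → ℕ} {a b p : ℕ} (he : MonotoneOn e (Set.Ico a b)) (hap : a ≤ p)
    (hpb : p < b) : (ofIco e a b).part (b - 1 - p) = e p := by
  set L := ((List.range' a (b - a)).map e).reverse
  have hmem : ∀ q ∈ List.range' a (b - a), q ∈ Set.Ico a b := by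
    intro q hq
    simp only [List.mem_range'_1] at hq
    exact ⟨hq.1, by omega⟩
  have hL : L.Pairwise (· ≥ ·) := by
    rw [List.pairwise_reverse, List.pairwise_map]
    exact (List.pairwise_lt_range' ..).imp_of_mem fun hq hr hqr =>
      he (hmem _ hq) (hmem _ hr) hqr.le
  have hparts : (ofIco e a b).parts = L.filter (0 < ·) := by
    refine List.Perm.eq_of_pairwise' (ofIco e a b).sorted (hL.filter _)
      (Multiset.coe_eq_coe.mp ?_)
    rw [ofIco, coe_parts_ofMultiset, ← Multiset.filter_coe, Multiset.coe_reverse,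
      ← Multiset.map_coe]
    rfl
  rw [part, hparts, List.getD_filter_pos_s3 hL, List.getD_eq_getElem _ _ (by simp [L]; omega)]
  simp only [L, List.getElem_reverse, List.getElem_map, List.getElem_range']
  congr 1
  simp
  omega

lemma ofIco_part {π : Ptn} {a b : ℕ} (h : π.length ≤ b - a) :
    ofIco (fun p => π.part (b - 1 - p)) a b = π := by
  refine ext_part (funext fun i => ?_)
  rcases lt_or_ge i (b - a) with hi | hi
  · have hmono : MonotoneOn (fun p => π.part (b - 1 - p)) (Set.Ico a b) :=
      fun p _ q hq hpq => π.part_antitone (by simp at hq; omega)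
    simpa [show b - 1 - (b - 1 - i) = i by omega] using
      part_ofIco hmono (p := b - 1 - i) (by omega) (by omega)
  · rw [part_eq_zero ((length_ofIco_le _ a b).trans hi), part_eq_zero (h.trans hi)]

end Ptn

section Sums

variable {M : Type*} [AddCommMonoid M]

lemma sum_range_sum_range_of_symm (g : ℕ → ℕ → M) (hg : ∀ p q, g p q = g q p) (P : ℕ) :
    ∑ p ∈ range P, ∑ q ∈ range P, g p q
      = ∑ p ∈ range P, (g p p + 2 • ∑ q ∈ range p, g p q) := by
  induction P with
  | zero => simp
  | succ P ih =>
    simp only [sum_range_succ, sum_add_distrib, ih, two_nsmul]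
    rw [sum_congr rfl fun p _ => hg p P]
    abel

lemma sum_range_two_mul (f : ℕ → M) (K : ℕ) :
    ∑ s ∈ range (2 * K), f s = ∑ u ∈ range K, (f (2 * u) + f (2 * u + 1)) := by
  induction K with
  | zero => simp
  | succ K ih =>
    rw [mul_add, mul_one, sum_range_succ, sum_range_succ, sum_range_succ, ih, add_assoc]

lemma sum_sum_Ico_of_antitone {c : ℕ → ℕ} (hc : Antitone c) (g : ℕ → M) (K : ℕ) :
    ∑ s ∈ range K, ∑ p ∈ Ico (c (s + 1)) (c s), g p = ∑ p ∈ Ico (c K) (c 0), g p := by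
  induction K with
  | zero => simp
  | succ K ih =>
    rw [sum_range_succ, ih, add_comm, sum_Ico_consecutive _ (hc K.le_succ) (hc K.zero_le)]

end Sums

-- For the charges `n` of one color, `conj n P s` is the paper's `r⁽ˢ⁺¹⁾`.
def conj (n : ℕ → ℕ) (P s : ℕ) : ℕ := #{p ∈ range P | s < n p}

section Conj

variable {n : ℕ → ℕ} {P K : ℕ}

lemma conj_antitone (n : ℕ → ℕ) (P : ℕ) : Antitone (conj n P) :=
  fun _ _ hst => card_le_card fun _ hp => by
    simp only [mem_filter] at hp ⊢
    exact ⟨hp.1, hst.trans_lt hp.2⟩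

lemma conj_le (n : ℕ → ℕ) (P s : ℕ) : conj n P s ≤ P :=
  (card_filter_le _ _).trans (card_range P).le

lemma conj_eq_zero (h : ∀ p < P, n p ≤ K) {s : ℕ} (hs : K ≤ s) : conj n P s = 0 :=
  card_eq_zero.2 <| filter_eq_empty_iff.2 fun p hp => by have := h p (mem_range.1 hp); omega

lemma conj_zero (h : ∀ p < P, 0 < n p) : conj n P 0 = P := by
  rw [conj, filter_true_of_mem fun p hp => h p (mem_range.1 hp), card_range]

lemma lt_conj_iff (hn : Antitone n) (hP : ∀ p, P ≤ p → n p = 0) {p s : ℕ} :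
    p < conj n P s ↔ s < n p := by
  constructor
  · intro hp
    by_contra! hs
    have hsub : {q ∈ range P | s < n q} ⊆ range p := fun q hq => by
      simp only [mem_filter, mem_range] at hq ⊢
      by_contra! hpq
      have := hn hpq
      omega
    exact absurd (card_le_card hsub) (by simpa [conj] using hp)
  · intro hs
    have hsub : range (p + 1) ⊆ {q ∈ range P | s < n q} := fun q hq => by
      simp only [mem_filter, mem_range] at hq ⊢
      have hq' : s < n q := hs.trans_le (hn (by omega))
      refine ⟨?_, hq'⟩
      by_contra! hPq
      rw [hP q hPq] at hq'
      omega
    simpa [conj] using card_le_card hsub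

lemma conj_conj (hn : Antitone n) (hP : ∀ p, P ≤ p → n p = 0) {N : ℕ} (hN : n 0 ≤ N) :
    conj (conj n P) N = n := by
  have hzero : ∀ s, N ≤ s → conj n P s = 0 :=
    fun s hs => conj_eq_zero (fun q _ => (hn q.zero_le).trans hN) hs
  funext s
  refine eq_of_forall_lt_iff fun p => ?_
  rw [lt_conj_iff (conj_antitone n P) hzero, lt_conj_iff hn hP]

lemma conj_eq_succ (hn : Antitone n) (hP : ∀ p, P ≤ p → n p = 0) {p s : ℕ}
    (h₁ : n (s + 1) ≤ p) (h₂ : p < n s) : conj n P p = s + 1 := by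
  have hs := (lt_conj_iff hn hP (p := s) (s := p)).2 h₂
  have hs₁ := (lt_conj_iff hn hP (p := s + 1) (s := p)).not.2 (by omega)
  omega

lemma sum_conj (h : ∀ p < P, n p ≤ K) : ∑ s ∈ range K, conj n P s = ∑ p ∈ range P, n p := by
  simp only [conj, card_filter]
  rw [sum_comm]
  refine sum_congr rfl fun p hp => ?_
  rw [← card_filter, show {s ∈ range K | s < n p} = range (n p) by
    ext s; have := h p (mem_range.1 hp); simp only [mem_filter, mem_range]; omega, card_range]

lemma sum_sum_min {a b : ℕ → ℕ} {Q : ℕ} (ha : ∀ p < P, a p ≤ K) (hb : ∀ q < Q, b q ≤ K) :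
    ∑ p ∈ range P, ∑ q ∈ range Q, min (a p) (b q)
      = ∑ s ∈ range K, conj a P s * conj b Q s := by
  simp only [conj, card_filter, sum_mul_sum, ite_zero_mul_ite_zero, mul_one]
  conv_rhs => rw [sum_comm]
  refine sum_congr rfl fun p hp => ?_
  conv_rhs => rw [sum_comm]
  refine sum_congr rfl fun q hq => ?_
  rw [← card_filter, show {s ∈ range K | s < a p ∧ s < b q} = range (min (a p) (b q)) by
    ext s; have := ha p (mem_range.1 hp); have := hb q (mem_range.1 hq)
    simp only [mem_filter, mem_range]; omega, card_range]

end Conj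

-- The right-hand side of (D1) for `f = 0`, and of (D3) for `f = QPData.crossOffset n₁ P₁`.
def energyBound (f : ℕ → ℤ) (n : ℕ → ℕ) (p : ℕ) : ℤ :=
  f (n p) - n p - 2 * ∑ q ∈ range p, (min (n p) (n q) : ℤ)

section EnergyBound

variable {f : ℕ → ℤ} {n : ℕ → ℕ}

lemma energyBound_succ {p : ℕ} (h : n (p + 1) = n p) :
    energyBound f n (p + 1) = energyBound f n p - 2 * n p := by
  simp only [energyBound, h, sum_range_succ, min_self]
  ring

lemma sum_energyBound {P K : ℕ} (h : ∀ p < P, n p ≤ K) :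
    ∑ p ∈ range P, energyBound f n p
      = ∑ p ∈ range P, f (n p) - ∑ s ∈ range K, (conj n P s : ℤ) ^ 2 := by
  have hsq : ∑ s ∈ range K, (conj n P s : ℤ) ^ 2
      = ∑ p ∈ range P, ((n p : ℤ) + 2 • ∑ q ∈ range p, (min (n p) (n q) : ℤ)) := by
    have hsymm := sum_range_sum_range_of_symm (fun p q => (min (n p) (n q) : ℤ))
      (fun _ _ => min_comm _ _) P
    simp only [min_self] at hsymm
    rw [← hsymm]
    simp only [sq]
    exact_mod_cast (sum_sum_min h h).symm
  simp only [energyBound, hsq, sum_sub_distrib, sum_add_distrib, nsmul_eq_mul, mul_sum]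
  push_cast
  ring

end EnergyBound

-- One color of a quasi-particle datum; the other color enters only through the offset `f`.
structure IsColorDatum (K : ℕ) (f : ℕ → ℤ) (P : ℕ) (n : ℕ → ℕ) (m : ℕ → ℤ) : Prop where
  antitone : Antitone n
  pos : ∀ p < P, 0 < n p
  le : ∀ p < P, n p ≤ K
  n_eq_zero : ∀ p, P ≤ p → n p = 0
  m_eq_zero : ∀ p, P ≤ p → m p = 0
  m_le : ∀ p < P, m p ≤ energyBound f n p
  m_succ_le : ∀ p, p + 1 < P → n (p + 1) = n p → m (p + 1) ≤ m p - 2 * (n p : ℤ)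

structure IsFermionicDatum (K : ℕ) (ρ : ℕ → ℕ) (π : ℕ → Ptn) : Prop where
  antitone : Antitone ρ
  eq_zero : ∀ s, K ≤ s → ρ s = 0
  length_le : ∀ s < K, (π s).length ≤ ρ s - ρ (s + 1)
  parts_eq_nil : ∀ s, K ≤ s → (π s).parts = []

def slack (f : ℕ → ℤ) (n : ℕ → ℕ) (m : ℕ → ℤ) (p : ℕ) : ℕ := (energyBound f n p - m p).toNat

-- Block `s` holds the quasi-particles of charge `s + 1`: the indices in
-- `[conj n P (s + 1), conj n P s)`.
def slackPtn (f : ℕ → ℤ) (P : ℕ) (n : ℕ → ℕ) (m : ℕ → ℤ) (s : ℕ) : Ptn :=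
  Ptn.ofIco (slack f n m) (conj n P (s + 1)) (conj n P s)

-- Inverse to `slackPtn`: index `p` of block `s` receives the part at position `ρ s - 1 - p`,
-- so that the slacks increase along the block.
def blockValue (K : ℕ) (ρ : ℕ → ℕ) (π : ℕ → Ptn) (p : ℕ) : ℕ :=
  (π (conj ρ K p - 1)).part (ρ (conj ρ K p - 1) - 1 - p)

def energyOfPtns (f : ℕ → ℤ) (K : ℕ) (ρ : ℕ → ℕ) (π : ℕ → Ptn) (p : ℕ) : ℤ :=
  if p < ρ 0 then energyBound f (conj ρ K) p - blockValue K ρ π p else 0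

namespace IsColorDatum

variable {K P : ℕ} {f : ℕ → ℤ} {n : ℕ → ℕ} {m : ℕ → ℤ} (h : IsColorDatum K f P n m)
include h

lemma conj_zero : conj n P 0 = P := _root_.conj_zero h.pos

lemma lt_conj_iff {p s : ℕ} : p < conj n P s ↔ s < n p :=
  _root_.lt_conj_iff h.antitone h.n_eq_zero

lemma conj_conj : conj (conj n P) K = n := by
  refine _root_.conj_conj h.antitone h.n_eq_zero ?_
  rcases P.eq_zero_or_pos with rfl | hP
  · simp [h.n_eq_zero 0 le_rfl]
  · exact h.le 0 hP

lemma slack_monotoneOn (s : ℕ) :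
    MonotoneOn (slack f n m) (Set.Ico (conj n P (s + 1)) (conj n P s)) := by
  refine monotoneOn_of_le_succ Set.ordConnected_Ico fun p _ hp hp₁ => ?_
  rw [Order.succ_eq_add_one] at hp₁ ⊢
  have hs₁ : s < n (p + 1) := h.lt_conj_iff.1 hp₁.2
  have hs₂ : ¬ s + 1 < n p := fun hlt => (not_lt.2 hp.1) (h.lt_conj_iff.2 hlt)
  have hanti : n (p + 1) ≤ n p := h.antitone (Nat.le_add_right p 1)
  have hP : p + 1 < P := by
    by_contra! hP
    rw [h.n_eq_zero _ hP] at hs₁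
    omega
  have hstep := h.m_succ_le p hP (by omega)
  have hbound := energyBound_succ (f := f) (n := n) (p := p) (by omega)
  exact Int.toNat_le_toNat (by omega)

lemma isFermionicDatum : IsFermionicDatum K (conj n P) (slackPtn f P n m) where
  antitone := conj_antitone n P
  eq_zero _ hs := conj_eq_zero h.le hs
  length_le _ _ := Ptn.length_ofIco_le _ _ _
  parts_eq_nil s hs := List.eq_nil_of_length_eq_zero <| Nat.le_zero.1 <|
    (Ptn.length_ofIco_le _ _ _).trans (by rw [conj_eq_zero h.le hs]; simp)

lemma sum_m_eq : ∑ p ∈ range P, m p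
    = ∑ p ∈ range P, energyBound f n p - ∑ s ∈ range K, ((slackPtn f P n m s).size : ℤ) := by
  have hsize : ∑ s ∈ range K, ((slackPtn f P n m s).size : ℤ)
      = ∑ p ∈ range P, (energyBound f n p - m p) := by
    simp only [slackPtn, Ptn.size_ofIco, Nat.cast_sum]
    rw [sum_sum_Ico_of_antitone (conj_antitone n P), conj_eq_zero h.le le_rfl, h.conj_zero,
      ← range_eq_Ico]
    exact sum_congr rfl fun p hp =>
      Int.toNat_of_nonneg (sub_nonneg.2 (h.m_le p (mem_range.1 hp)))
  rw [hsize, sum_sub_distrib]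
  ring

lemma energyOfPtns_slackPtn : energyOfPtns f K (conj n P) (slackPtn f P n m) = m := by
  funext p
  rw [energyOfPtns, h.conj_zero, blockValue, h.conj_conj]
  split_ifs with hp
  · obtain ⟨s, hs⟩ : ∃ s, n p = s + 1 := ⟨n p - 1, by have := h.pos p hp; omega⟩
    have hblock₁ : conj n P (s + 1) ≤ p := not_lt.1 fun hlt => by
      have := h.lt_conj_iff.1 hlt
      omega
    have hblock₂ : p < conj n P s := h.lt_conj_iff.2 (by omega)
    rw [hs, Nat.add_sub_cancel, slackPtn, Ptn.part_ofIco (h.slack_monotoneOn s) hblock₁ hblock₂,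
      slack, Int.toNat_of_nonneg (sub_nonneg.2 (h.m_le p hp))]
    ring
  · exact (h.m_eq_zero p (not_lt.1 hp)).symm

end IsColorDatum

namespace IsFermionicDatum

variable {K : ℕ} {ρ : ℕ → ℕ} {π : ℕ → Ptn} (h : IsFermionicDatum K ρ π)
include h

lemma conj_conj : conj (conj ρ K) (ρ 0) = ρ := _root_.conj_conj h.antitone h.eq_zero le_rfl

lemma length_le_sub (s : ℕ) : (π s).length ≤ ρ s - ρ (s + 1) := by
  by_cases hs : s < K
  · exact h.length_le s hs
  · simp [Ptn.length, h.parts_eq_nil s (not_lt.1 hs)]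

lemma blockValue_eq {p s : ℕ} (h₁ : ρ (s + 1) ≤ p) (h₂ : p < ρ s) :
    blockValue K ρ π p = (π s).part (ρ s - 1 - p) := by
  rw [blockValue, conj_eq_succ h.antitone h.eq_zero h₁ h₂, Nat.add_sub_cancel]

lemma isColorDatum (f : ℕ → ℤ) : IsColorDatum K f (ρ 0) (conj ρ K) (energyOfPtns f K ρ π) where
  antitone := conj_antitone ρ K
  pos _ hp := (lt_conj_iff h.antitone h.eq_zero).2 hp
  le p _ := conj_le ρ K p
  n_eq_zero p hp := Nat.eq_zero_of_not_pos fun hpos => by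
    have := (lt_conj_iff h.antitone h.eq_zero).1 hpos
    omega
  m_eq_zero p hp := if_neg (by omega)
  m_le p hp := by
    rw [energyOfPtns, if_pos hp]
    exact sub_le_self _ (Nat.cast_nonneg _)
  m_succ_le p hp hn := by
    have hv : blockValue K ρ π p ≤ blockValue K ρ π (p + 1) := by
      simp only [blockValue, hn]
      exact Ptn.part_antitone _ (by omega)
    rw [energyOfPtns, energyOfPtns, if_pos hp, if_pos (by omega), energyBound_succ hn]
    have : (blockValue K ρ π p : ℤ) ≤ blockValue K ρ π (p + 1) := by exact_mod_cast hv
    linarith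

lemma slackPtn_energyOfPtns (f : ℕ → ℤ) :
    slackPtn f (ρ 0) (conj ρ K) (energyOfPtns f K ρ π) = π := by
  funext s
  rw [slackPtn, h.conj_conj]
  calc Ptn.ofIco (slack f (conj ρ K) (energyOfPtns f K ρ π)) (ρ (s + 1)) (ρ s)
      = Ptn.ofIco (fun p => (π s).part (ρ s - 1 - p)) (ρ (s + 1)) (ρ s) := by
        refine Ptn.ofIco_congr fun p hp => ?_
        rw [mem_Ico] at hp
        rw [slack, energyOfPtns, if_pos (hp.2.trans_le (h.antitone s.zero_le)), sub_sub_cancel,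
          Int.toNat_natCast, h.blockValue_eq hp.1 hp.2]
    _ = π s := Ptn.ofIco_part (h.length_le_sub s)

end IsFermionicDatum

lemma antitone_of_le_of_eq_zero {n : ℕ → ℕ} {P : ℕ} (h : ∀ p q, p ≤ q → q < P → n q ≤ n p)
    (h₀ : ∀ p, P ≤ p → n p = 0) : Antitone n := fun p q hpq => by
  rcases lt_or_ge q P with hq | hq
  · exact h p q hpq hq
  · rw [h₀ q hq]
    exact Nat.zero_le _

def fermionicEnergy (k : ℕ) (ρ σ : ℕ → ℕ) : ℤ :=
  (∑ s ∈ range k, (ρ s : ℤ) ^ 2) + (∑ s ∈ range (2 * k), (σ s : ℤ) ^ 2)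
    - ∑ s ∈ range k, (ρ s : ℤ) * ((σ (2 * s) : ℤ) + (σ (2 * s + 1) : ℤ))

namespace QPData

def crossOffset (n₁ : ℕ → ℕ) (P₁ c : ℕ) : ℤ := ∑ q ∈ range P₁, (min (2 * n₁ q) c : ℤ)

lemma sum_crossOffset {n₁ n₂ : ℕ → ℕ} {P₁ P₂ k : ℕ} (h₁ : ∀ p < P₁, n₁ p ≤ k)
    (h₂ : ∀ p < P₂, n₂ p ≤ 2 * k) :
    ∑ p ∈ range P₂, crossOffset n₁ P₁ (n₂ p)
      = ∑ u ∈ range k, (conj n₁ P₁ u : ℤ) * (conj n₂ P₂ (2 * u) + conj n₂ P₂ (2 * u + 1)) := by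
  have hconj : ∀ s, conj (fun q => 2 * n₁ q) P₁ s = conj n₁ P₁ (s / 2) := fun s => by
    unfold conj
    congr 1
    exact filter_congr fun q _ => by dsimp only; omega
  have hnat := sum_sum_min (a := fun q => 2 * n₁ q) (b := n₂) (K := 2 * k)
    (fun q hq => by have := h₁ q hq; omega) h₂
  simp only [hconj, sum_range_two_mul, Nat.mul_div_cancel_left _ two_pos,
    show ∀ u, (2 * u + 1) / 2 = u by omega, ← mul_add] at hnat
  simp only [crossOffset]
  rw [sum_comm]
  exact_mod_cast hnat

lemma isColorDatum₁ (d : QPData) {K : ℕ} (hK : ∀ p < d.P1, d.n1 p ≤ K) :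
    IsColorDatum K 0 d.P1 d.n1 d.m1 where
  antitone := antitone_of_le_of_eq_zero d.n1_anti d.n1_zero
  pos := d.n1_pos
  le := hK
  n_eq_zero := d.n1_zero
  m_eq_zero := d.m1_zero
  m_le p hp := by
    have := d.D1 p hp
    simp only [energyBound, Pi.zero_apply]
    linarith
  m_succ_le := d.D2

lemma isColorDatum₂ (d : QPData) {K : ℕ} (hK : ∀ p < d.P2, d.n2 p ≤ K) :
    IsColorDatum K (crossOffset d.n1 d.P1) d.P2 d.n2 d.m2 where
  antitone := antitone_of_le_of_eq_zero d.n2_anti d.n2_zero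
  pos := d.n2_pos
  le := hK
  n_eq_zero := d.n2_zero
  m_eq_zero := d.m2_zero
  m_le p hp := by
    have := d.D3 p hp
    simp only [energyBound, crossOffset]
    linarith
  m_succ_le := d.D4

def ofColorData {K₁ K₂ P₁ P₂ : ℕ} {n₁ n₂ : ℕ → ℕ} {m₁ m₂ : ℕ → ℤ}
    (h₁ : IsColorDatum K₁ 0 P₁ n₁ m₁) (h₂ : IsColorDatum K₂ (crossOffset n₁ P₁) P₂ n₂ m₂) :
    QPData where
  P1 := P₁
  P2 := P₂
  n1 := n₁
  n2 := n₂
  m1 := m₁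
  m2 := m₂
  n1_pos := h₁.pos
  n2_pos := h₂.pos
  n1_anti _ _ hpq _ := h₁.antitone hpq
  n2_anti _ _ hpq _ := h₂.antitone hpq
  n1_zero := h₁.n_eq_zero
  n2_zero := h₂.n_eq_zero
  m1_zero := h₁.m_eq_zero
  m2_zero := h₂.m_eq_zero
  D1 p hp := by
    have := h₁.m_le p hp
    simp only [energyBound, Pi.zero_apply] at this
    linarith
  D2 := h₁.m_succ_le
  D3 p hp := by
    have := h₂.m_le p hp
    simp only [energyBound, crossOffset] at this
    linarith
  D4 := h₂.m_succ_le

def toTuple (d : QPData) : (ℕ → ℕ) × (ℕ → ℕ) × (ℕ → Ptn) × (ℕ → Ptn) :=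
  (conj d.n1 d.P1, conj d.n2 d.P2, slackPtn 0 d.P1 d.n1 d.m1,
    slackPtn (crossOffset d.n1 d.P1) d.P2 d.n2 d.m2)

def ofTuple (k : ℕ) (x : (ℕ → ℕ) × (ℕ → ℕ) × (ℕ → Ptn) × (ℕ → Ptn))
    (h₁ : IsFermionicDatum k x.1 x.2.2.1) (h₂ : IsFermionicDatum (2 * k) x.2.1 x.2.2.2) :
    QPData :=
  ofColorData (h₁.isColorDatum 0) (h₂.isColorDatum (crossOffset (conj x.1 k) (x.1 0)))

section Tuple

variable {k : ℕ}

lemma colorType_eq {d : QPData} (hA : d.Admissible k) :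
    d.colorType = (∑ s ∈ range (2 * k), d.toTuple.2.1 s, ∑ s ∈ range k, d.toTuple.1 s) := by
  simp only [colorType, toTuple, sum_conj hA.1, sum_conj hA.2]

lemma energy_eq {d : QPData} (hA : d.Admissible k) :
    d.energy = ∑ s ∈ range k, ((d.toTuple.2.2.1 s).size : ℤ)
      + ∑ s ∈ range (2 * k), ((d.toTuple.2.2.2 s).size : ℤ)
      + fermionicEnergy k d.toTuple.1 d.toTuple.2.1 := by
  have h₁ := (d.isColorDatum₁ hA.1).sum_m_eq
  have h₂ := (d.isColorDatum₂ hA.2).sum_m_eq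
  rw [sum_energyBound hA.1] at h₁
  rw [sum_energyBound hA.2, sum_crossOffset hA.1 hA.2] at h₂
  simp only [energy, toTuple, fermionicEnergy, Pi.zero_apply, sum_const_zero] at *
  linarith

lemma admissible_ofTuple {x : (ℕ → ℕ) × (ℕ → ℕ) × (ℕ → Ptn) × (ℕ → Ptn)}
    (h₁ : IsFermionicDatum k x.1 x.2.2.1) (h₂ : IsFermionicDatum (2 * k) x.2.1 x.2.2.2) :
    (ofTuple k x h₁ h₂).Admissible k :=
  ⟨fun p _ => conj_le _ _ p, fun p _ => conj_le _ _ p⟩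

lemma ofTuple_toTuple {d : QPData} (hA : d.Admissible k) :
    ofTuple k d.toTuple (d.isColorDatum₁ hA.1).isFermionicDatum
      (d.isColorDatum₂ hA.2).isFermionicDatum = d := by
  have c₁ := d.isColorDatum₁ hA.1
  have c₂ := d.isColorDatum₂ hA.2
  ext : 1
  · exact c₁.conj_zero
  · exact c₂.conj_zero
  · exact c₁.conj_conj
  · exact c₂.conj_conj
  · exact c₁.energyOfPtns_slackPtn
  · show energyOfPtns (crossOffset (conj (conj d.n1 d.P1) k) (conj d.n1 d.P1 0)) _ _ _ = _
    rw [c₁.conj_conj, c₁.conj_zero]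
    exact c₂.energyOfPtns_slackPtn

lemma toTuple_ofTuple {x : (ℕ → ℕ) × (ℕ → ℕ) × (ℕ → Ptn) × (ℕ → Ptn)}
    (h₁ : IsFermionicDatum k x.1 x.2.2.1) (h₂ : IsFermionicDatum (2 * k) x.2.1 x.2.2.2) :
    (ofTuple k x h₁ h₂).toTuple = x := by
  obtain ⟨ρ, σ, π, τ⟩ := x
  simp only [toTuple, ofTuple, ofColorData]
  rw [h₁.conj_conj, h₂.conj_conj, h₁.slackPtn_energyOfPtns, h₂.slackPtn_energyOfPtns]

end Tuple

def IsFermionicTuple (k : ℕ) (m : ℤ) (r1 r2 : ℕ)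
    (x : (ℕ → ℕ) × (ℕ → ℕ) × (ℕ → Ptn) × (ℕ → Ptn)) : Prop :=
  IsFermionicDatum k x.1 x.2.2.1 ∧ IsFermionicDatum (2 * k) x.2.1 x.2.2.2 ∧
    ∑ s ∈ range k, x.1 s = r1 ∧ ∑ s ∈ range (2 * k), x.2.1 s = r2 ∧
    ∑ s ∈ range k, ((x.2.2.1 s).size : ℤ) + ∑ s ∈ range (2 * k), ((x.2.2.2 s).size : ℤ)
      = m - fermionicEnergy k x.1 x.2.1

def admissibleEquiv (k : ℕ) (m : ℤ) (r1 r2 : ℕ) :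
    {d : QPData // d.Admissible k ∧ d.colorType = (r2, r1) ∧ d.energy = m}
      ≃ {x // IsFermionicTuple k m r1 r2 x} where
  toFun d := ⟨d.1.toTuple, by
    obtain ⟨d, hA, hC, hE⟩ := d
    rw [colorType_eq hA, Prod.mk.injEq] at hC
    rw [energy_eq hA] at hE
    exact ⟨(d.isColorDatum₁ hA.1).isFermionicDatum, (d.isColorDatum₂ hA.2).isFermionicDatum,
      hC.2, hC.1, by linarith⟩⟩
  invFun x := ⟨ofTuple k x.1 x.2.1 x.2.2.1, by
    obtain ⟨x, h₁, h₂, hr₁, hr₂, hE⟩ := x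
    have hA := admissible_ofTuple h₁ h₂
    refine ⟨hA, ?_, ?_⟩
    · rw [colorType_eq hA, toTuple_ofTuple, hr₁, hr₂]
    · rw [energy_eq hA, toTuple_ofTuple]
      linarith⟩
  left_inv d := Subtype.ext (ofTuple_toTuple d.2.1)
  right_inv x := Subtype.ext (toTuple_ofTuple x.2.1 x.2.2.1)

end QPData

/-- The tuples `(r₁⁽¹⁾, …, r₁⁽ᵏ⁾)` and `(r₂⁽¹⁾, …, r₂⁽²ᵏ⁾)` are encoded as antitone functions
`x.1`, `x.2.1` vanishing from index `k`, resp. `2k`, with `x.1 s = r₁⁽ˢ⁺¹⁾`; counting the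
tuples `x` realizes the sum over all pairs `(ρ, σ)`. -/
theorem card_admissible_qpdata_eq_fermionic_count_general
    (k : ℕ) (m : ℤ) (r1 r2 : ℕ) :
    Nat.card {d : QPData // d.Admissible k ∧ d.colorType = (r2, r1) ∧ d.energy = m}
      = Nat.card {x : (ℕ → ℕ) × (ℕ → ℕ) × (ℕ → Ptn) × (ℕ → Ptn) //
          (∀ i j, i ≤ j → x.1 j ≤ x.1 i) ∧ (∀ s, k ≤ s → x.1 s = 0) ∧
          (∑ s ∈ Finset.range k, x.1 s = r1) ∧
          (∀ i j, i ≤ j → x.2.1 j ≤ x.2.1 i) ∧ (∀ s, 2 * k ≤ s → x.2.1 s = 0) ∧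
          (∑ s ∈ Finset.range (2 * k), x.2.1 s = r2) ∧
          (∀ s, s < k → (x.2.2.1 s).length ≤ x.1 s - x.1 (s + 1)) ∧
          (∀ s, k ≤ s → (x.2.2.1 s).parts = []) ∧
          (∀ s, s < 2 * k → (x.2.2.2 s).length ≤ x.2.1 s - x.2.1 (s + 1)) ∧
          (∀ s, 2 * k ≤ s → (x.2.2.2 s).parts = []) ∧
          ((∑ s ∈ Finset.range k, ((x.2.2.1 s).size : ℤ))
              + ∑ s ∈ Finset.range (2 * k), ((x.2.2.2 s).size : ℤ)
            = m - ((∑ s ∈ Finset.range k, (x.1 s : ℤ) ^ 2)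
                + (∑ s ∈ Finset.range (2 * k), (x.2.1 s : ℤ) ^ 2)
                - ∑ s ∈ Finset.range k,
                    (x.1 s : ℤ) * ((x.2.1 (2 * s) : ℤ) + (x.2.1 (2 * s + 1) : ℤ))))} := by
  refine Nat.card_congr ((QPData.admissibleEquiv k m r1 r2).trans
    (Equiv.subtypeEquivRight fun x => ?_))
  exact ⟨fun ⟨⟨h₁, h₂, h₃, h₄⟩, ⟨h₅, h₆, h₇, h₈⟩, h₉, h₁₀, h₁₁⟩ =>
      ⟨h₁, h₂, h₉, h₅, h₆, h₁₀, h₃, h₄, h₇, h₈, h₁₁⟩,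
    fun ⟨h₁, h₂, h₉, h₅, h₆, h₁₀, h₃, h₄, h₇, h₈, h₁₁⟩ =>
      ⟨⟨h₁, h₂, h₃, h₄⟩, ⟨h₅, h₆, h₇, h₈⟩, h₉, h₁₀, h₁₁⟩⟩

/-- For `k ≥ 1`, any integer `m` and nonnegative integers `r₁, r₂`,
the number of `k`-admissible quasi-particle data of color-type `(r₂, r₁)` and total
energy `m` equals the number of tuples `(ρ, σ, π, τ)` where
`ρ = (r₁⁽¹⁾ ≥ … ≥ r₁⁽ᵏ⁾ ≥ 0)` sums to `r₁`, `σ = (r₂⁽¹⁾ ≥ … ≥ r₂⁽²ᵏ⁾ ≥ 0)` sums to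
`r₂` (both encoded as antitone functions `ℕ → ℕ` vanishing from index `k`, resp. `2k`,
on, with `ρ s` denoting `r₁⁽ˢ⁺¹⁾`), and `(π⁽¹⁾, …, π⁽ᵏ⁾)`, `(τ⁽¹⁾, …, τ⁽²ᵏ⁾)` are
partitions with `ℓ(π⁽ˢ⁾) ≤ r₁⁽ˢ⁾ − r₁⁽ˢ⁺¹⁾`, `ℓ(τ⁽ˢ⁾) ≤ r₂⁽ˢ⁾ − r₂⁽ˢ⁺¹⁾` and
`Σ_s |π⁽ˢ⁾| + Σ_s |τ⁽ˢ⁾| = m − E(ρ,σ)`, where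
`E(ρ,σ) = Σ_{s=1}^{k} (r₁⁽ˢ⁾)² + Σ_{s=1}^{2k} (r₂⁽ˢ⁾)²
  − Σ_{s=1}^{k} r₁⁽ˢ⁾ (r₂⁽²ˢ⁻¹⁾ + r₂⁽²ˢ⁾)`.
(Counting such tuples realizes the sum over all pairs `(ρ, σ)` of the number of
corresponding tuples of partitions.) -/
theorem card_admissible_qpdata_eq_fermionic_count
    (k : ℕ) (hk : 1 ≤ k) (m : ℤ) (r1 r2 : ℕ) :
    Nat.card {d : QPData // d.Admissible k ∧ d.colorType = (r2, r1) ∧ d.energy = m}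
      = Nat.card {x : (ℕ → ℕ) × (ℕ → ℕ) × (ℕ → Ptn) × (ℕ → Ptn) //
          (∀ i j, i ≤ j → x.1 j ≤ x.1 i) ∧ (∀ s, k ≤ s → x.1 s = 0) ∧
          (∑ s ∈ Finset.range k, x.1 s = r1) ∧
          (∀ i j, i ≤ j → x.2.1 j ≤ x.2.1 i) ∧ (∀ s, 2 * k ≤ s → x.2.1 s = 0) ∧
          (∑ s ∈ Finset.range (2 * k), x.2.1 s = r2) ∧
          (∀ s, s < k → (x.2.2.1 s).length ≤ x.1 s - x.1 (s + 1)) ∧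
          (∀ s, k ≤ s → (x.2.2.1 s).parts = []) ∧
          (∀ s, s < 2 * k → (x.2.2.2 s).length ≤ x.2.1 s - x.2.1 (s + 1)) ∧
          (∀ s, 2 * k ≤ s → (x.2.2.2 s).parts = []) ∧
          ((∑ s ∈ Finset.range k, ((x.2.2.1 s).size : ℤ))
              + ∑ s ∈ Finset.range (2 * k), ((x.2.2.2 s).size : ℤ)
            = m - ((∑ s ∈ Finset.range k, (x.1 s : ℤ) ^ 2)
                + (∑ s ∈ Finset.range (2 * k), (x.2.1 s : ℤ) ^ 2)
                - ∑ s ∈ Finset.range k,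
                    (x.1 s : ℤ) * ((x.2.1 (2 * s) : ℤ) + (x.2.1 (2 * s + 1) : ℤ))))} :=
  card_admissible_qpdata_eq_fermionic_count_general k m r1 r2
end

section
/- Fix an integer k ≥ 1 and an integer s with 1 ≤ s ≤ k. Let b be a k-admissible quasi-particle datum with color-1 charges n_{P₁,1} ≤ … ≤ n_{1,1} and energies (m_{p,1})_{p=1}^{P₁}, and color-2 charges n_{P₂,2} ≤ … ≤ n_{1,2} and energies (m_{p,2})_{p=1}^{P₂}, and assume P₁ ≥ 1, n_{1,1} = s and m_{1,1} = −s. Define a new datum b' as follows: the color-1 quasiparticle with index p = 1 is deleted, the remaining color-1 charges are unchanged and their energies become m'_{p,1} = m_{p,1} + 2·n_{p,1} for 2 ≤ p ≤ P₁; the color-2 charges are unchanged and their energies become m'_{p,2} = m_{p,2} − min{n_{p,2}, 2s} for 1 ≤ p ≤ P₂. Then b' is again a k-admissible quasi-particle datum (i.e., its charges and energies satisfy the difference conditions (D1)–(D4) and the charge bounds). -/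
/-!
Deleting the color-1 quasi-particle of largest charge `s = n_{1,1}` removes exactly one term
from each sum in the difference conditions: `min (n_{p,1}) (n_{1,1}) = n_{p,1}` from the
right-hand side of (D1) and `min (2s) (n_{p,2})` from that of (D3). The energy shifts
`+2 n_{p,1}` and `-min (n_{p,2}) (2s)` compensate these terms exactly, while (D2), (D4) and
the charge bounds only involve quantities that are unchanged or shifted uniformly.
-/

open Finset

namespace QPData

variable (b : QPData)

lemma n1_le_n1_zero {p : ℕ} (hp : p < b.P1) : b.n1 p ≤ b.n1 0 :=
  b.n1_anti 0 p p.zero_le hp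

lemma m1_succ_add_le {p : ℕ} (hp : p + 1 < b.P1) :
    b.m1 (p + 1) + 2 * (b.n1 (p + 1) : ℤ) ≤
      -(b.n1 (p + 1) : ℤ) - 2 * ∑ p' ∈ range p, (min (b.n1 (p + 1)) (b.n1 (p' + 1)) : ℤ) := by
  have hD1 := b.D1 (p + 1) hp
  have hmin : (min (b.n1 (p + 1)) (b.n1 0) : ℤ) = b.n1 (p + 1) :=
    min_eq_left (mod_cast b.n1_le_n1_zero hp)
  rw [sum_range_succ', hmin] at hD1
  linarith

lemma m2_sub_le {p : ℕ} (hP1 : 1 ≤ b.P1) (hp : p < b.P2) :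
    b.m2 p - (min (b.n2 p) (2 * b.n1 0) : ℤ) ≤
      -(b.n2 p : ℤ) + ∑ q ∈ range (b.P1 - 1), (min (2 * b.n1 (q + 1)) (b.n2 p) : ℤ)
        - 2 * ∑ p' ∈ range p, (min (b.n2 p) (b.n2 p') : ℤ) := by
  have hD3 := b.D3 p hp
  rw [← Nat.sub_add_cancel hP1, sum_range_succ', min_comm (2 * (b.n1 0 : ℤ))] at hD3
  linarith

/-- The datum `b'` obtained from `b` by the Weyl translation `e_{α₁}`. -/
def weylTranslate (hP1 : 1 ≤ b.P1) : QPData where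
  P1 := b.P1 - 1
  P2 := b.P2
  n1 p := b.n1 (p + 1)
  n2 := b.n2
  m1 p := b.m1 (p + 1) + 2 * (b.n1 (p + 1) : ℤ)
  m2 p := b.m2 p - (min (b.n2 p) (2 * b.n1 0) : ℤ)
  n1_pos p hp := b.n1_pos (p + 1) (by omega)
  n2_pos := b.n2_pos
  n1_anti p q hpq hq := b.n1_anti (p + 1) (q + 1) (by omega) (by omega)
  n2_anti := b.n2_anti
  n1_zero p hp := b.n1_zero (p + 1) (by omega)
  n2_zero := b.n2_zero
  m1_zero p hp := by simp [b.m1_zero (p + 1) (by omega), b.n1_zero (p + 1) (by omega)]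
  m2_zero p hp := by simp [b.m2_zero p hp, b.n2_zero p hp]
  D1 p hp := b.m1_succ_add_le (by omega)
  D2 p hp heq := by
    have hD2 := b.D2 (p + 1) (by omega) heq
    rw [heq]
    linarith
  D3 p hp := b.m2_sub_le hP1 hp
  D4 p hp heq := by
    have hD4 := b.D4 p hp heq
    rw [heq]
    linarith

lemma admissible_weylTranslate {k : ℕ} (hP1 : 1 ≤ b.P1) (hadm : b.Admissible k) :
    (b.weylTranslate hP1).Admissible k :=
  ⟨fun p hp => hadm.1 (p + 1) (by simp only [weylTranslate] at hp; omega), hadm.2⟩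

end QPData

theorem qpdata_weyl_translation_general
    (k s : ℕ)
    (b : QPData) (hadm : b.Admissible k)
    (hP1 : 1 ≤ b.P1) (hcharge : b.n1 0 = s) :
    ∃ b' : QPData,
      b'.P1 = b.P1 - 1 ∧
      b'.P2 = b.P2 ∧
      b'.n1 = (fun p => b.n1 (p + 1)) ∧
      b'.n2 = b.n2 ∧
      b'.m1 = (fun p => b.m1 (p + 1) + 2 * (b.n1 (p + 1) : ℤ)) ∧
      b'.m2 = (fun p => b.m2 p - (min (b.n2 p) (2 * s) : ℤ)) ∧
      b'.Admissible k := by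
  subst hcharge
  exact ⟨b.weylTranslate hP1, rfl, rfl, rfl, rfl, rfl, rfl, b.admissible_weylTranslate hP1 hadm⟩

/-- Proposition 3.3 of the paper.  Fix `k ≥ 1` and `1 ≤ s ≤ k`.
Let `b` be a `k`-admissible quasi-particle datum with `P₁ ≥ 1` whose largest color-1
charge is `n_{1,1} = s` with energy `m_{1,1} = −s` (in our 0-based indexing:
`n1 0 = s`, `m1 0 = −s`).  Delete that quasi-particle, replace the remaining color-1
energies by `m'_{p,1} = m_{p,1} + 2 n_{p,1}` and the color-2 energies by
`m'_{p,2} = m_{p,2} − min (n_{p,2}) (2s)`, keeping all charges.  Then the result is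
again a `k`-admissible quasi-particle datum. -/
theorem qpdata_weyl_translation
    (k s : ℕ) (hk : 1 ≤ k) (hs : 1 ≤ s) (hsk : s ≤ k)
    (b : QPData) (hadm : b.Admissible k)
    (hP1 : 1 ≤ b.P1) (hcharge : b.n1 0 = s) (henergy : b.m1 0 = -(s : ℤ)) :
    ∃ b' : QPData,
      b'.P1 = b.P1 - 1 ∧
      b'.P2 = b.P2 ∧
      b'.n1 = (fun p => b.n1 (p + 1)) ∧
      b'.n2 = b.n2 ∧
      b'.m1 = (fun p => b.m1 (p + 1) + 2 * (b.n1 (p + 1) : ℤ)) ∧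
      b'.m2 = (fun p => b.m2 p - (min (b.n2 p) (2 * s) : ℤ)) ∧
      b'.Admissible k :=
  qpdata_weyl_translation_general k s b hadm hP1 hcharge
end
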